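/- For all n ≥ 1, the sum of the periodicity function of the Thue–Morse word over the odd indices below n satisfies (3/8)(n−1)² ≤ Σ_{0 ≤ i < n, i odd} p_t(i) ≤ (3/4)n². -/

import Mathlib

open Finset Filter Asymptotics

/-- `n` is a local period of the infinite word `w` at position `i`:
`n ≥ 1` and either (`n ≤ i` and `w_{i+k} = w_{i-n+k}` for all `k < n`)
or (`n > i` and `w_k = w_{n+k}` for all `k < i`). -/
def IsLocalPeriodAt {α : Type*} (w : ℕ → α) (i n : ℕ) : Prop :=
  1 ≤ n ∧ ((n ≤ i ∧ ∀ k < n, w (i + k) = w (i - n + k)) ∨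
           (i < n ∧ ∀ k < i, w k = w (n + k)))

/-- The periodicity function `p_w(i)`: the least local period of `w` at `i`. -/
noncomputable def perFn {α : Type*} (w : ℕ → α) (i : ℕ) : ℕ :=
  sInf {n | IsLocalPeriodAt w i n}

/-- The summatory function `P_w(n) = ∑_{j<n} p_w(j)`. -/
noncomputable def sumFn {α : Type*} (w : ℕ → α) (n : ℕ) : ℕ :=
  ∑ j ∈ Finset.range n, perFn w j

/-- The periodic complexity `h_w(n) = P_w(n)/n`. -/
noncomputable def perComplexity {α : Type*} (w : ℕ → α) (n : ℕ) : ℝ :=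
  (sumFn w n : ℝ) / n

/-- The Thue–Morse word: `t_i = 0` iff the number of 1's in the binary
representation of `i` is even. -/
def tm (i : ℕ) : ℕ :=
  if Even ((Nat.digits 2 i).count 1) then 0 else 1

/-!
For odd `i`, `p_t(i) = 3 · 2^⌊log₂ i⌋`. A local period `n ≤ i` would be a square in `t` centred
at the odd position `i`; halving the square via `t_{2m} = t_m`, `t_{2m+1} = 1 - t_m` shows there
is none. A local period `n > i` is an occurrence at `n` of the prefix of length `i > 2^k`, and
halving again shows the prefix of length `2^k + 1` first recurs at `3 · 2^k`, where it does recur.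
Hence `3i/2 < p_t(i) ≤ 3i`, and summing over the `⌊n/2⌋` odd `i < n`, whose sum is `⌊n/2⌋²`,
gives the bounds.
-/

lemma tm_le_one (i : ℕ) : tm i ≤ 1 := by
  unfold tm; split <;> simp

lemma tm_two_mul (m : ℕ) : tm (2 * m) = tm m := by
  rcases Nat.eq_zero_or_pos m with rfl | hm
  · rfl
  unfold tm
  rw [Nat.digits_def' one_lt_two (by omega), Nat.mul_mod_right, Nat.mul_div_cancel_left m two_pos]
  simp

lemma tm_two_mul_add_one (m : ℕ) : tm (2 * m + 1) = 1 - tm m := by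
  unfold tm
  rw [Nat.digits_def' one_lt_two (by omega), Nat.mul_add_mod_self_left,
    Nat.mul_add_div two_pos]
  by_cases he : Even ((Nat.digits 2 m).count 1) <;> simp [he, Nat.even_add_one]

lemma tm_three_mul_two_pow_add {k r : ℕ} (hr : r < 2 ^ (k + 1)) :
    tm (3 * 2 ^ k + r) = tm r := by
  induction k generalizing r with
  | zero => interval_cases r <;> decide
  | succ k ih =>
    obtain ⟨s, rfl | rfl⟩ := Nat.even_or_odd' r
    · rw [show 3 * 2 ^ (k + 1) + 2 * s = 2 * (3 * 2 ^ k + s) by ring, tm_two_mul, tm_two_mul,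
        ih (by rw [pow_succ] at hr; omega)]
    · rw [show 3 * 2 ^ (k + 1) + (2 * s + 1) = 2 * (3 * 2 ^ k + s) + 1 by ring,
        tm_two_mul_add_one, tm_two_mul_add_one, ih (by rw [pow_succ] at hr; omega)]

lemma tm_not_square_of_odd_center {j n : ℕ} (hn : 1 ≤ n) (hodd : Odd (j + n)) :
    ¬ ∀ k < n, tm (j + n + k) = tm (j + k) := by
  induction n using Nat.strong_induction_on generalizing j with
  | _ n ih =>
  intro hsq
  obtain ⟨q, rfl | rfl⟩ := Nat.even_or_odd' n
  · -- The even and odd offsets give squares of period `q` starting at `a` and at `a + 1`.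
    obtain ⟨a, rfl⟩ : Odd j := by simpa [Nat.odd_add, parity_simps] using hodd
    have hsq_a : ∀ s < q, tm (a + q + s) = tm (a + s) := fun s hs => by
      have h := hsq (2 * s) (by omega)
      rw [show 2 * a + 1 + 2 * q + 2 * s = 2 * (a + q + s) + 1 by ring,
        show 2 * a + 1 + 2 * s = 2 * (a + s) + 1 by ring,
        tm_two_mul_add_one, tm_two_mul_add_one] at h
      have := tm_le_one (a + q + s); have := tm_le_one (a + s); omega
    have hsq_succ : ∀ s < q, tm (a + 1 + q + s) = tm (a + 1 + s) := fun s hs => by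
      have h := hsq (2 * s + 1) (by omega)
      rwa [show 2 * a + 1 + 2 * q + (2 * s + 1) = 2 * (a + 1 + q + s) by ring,
        show 2 * a + 1 + (2 * s + 1) = 2 * (a + 1 + s) by ring, tm_two_mul, tm_two_mul] at h
    rcases Nat.even_or_odd (a + q) with he | ho
    · exact ih q (by omega) (by omega) (by rw [add_right_comm]; exact he.add_one) hsq_succ
    · exact ih q (by omega) (by omega) ho hsq_a
  · -- With an odd period the square forces `t_{p+q} = ⋯ = t_{p+2q}` and `t_{p+q} ≠ t_{p+2q}`.
    obtain ⟨p, rfl⟩ : Even j := by simpa [Nat.odd_add, parity_simps] using hodd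
    have hflip : ∀ s ≤ q, tm (p + s) + tm (p + q + s) = 1 := fun s hs => by
      have h := hsq (2 * s) (by omega)
      rw [show p + p + (2 * q + 1) + 2 * s = 2 * (p + q + s) + 1 by ring,
        show p + p + 2 * s = 2 * (p + s) by ring, tm_two_mul_add_one, tm_two_mul] at h
      have := tm_le_one (p + q + s); omega
    have hflip' : ∀ s < q, tm (p + s) + tm (p + q + s + 1) = 1 := fun s hs => by
      have h := hsq (2 * s + 1) (by omega)
      rw [show p + p + (2 * q + 1) + (2 * s + 1) = 2 * (p + q + s + 1) by ring,
        show p + p + (2 * s + 1) = 2 * (p + s) + 1 by ring, tm_two_mul, tm_two_mul_add_one] at h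
      have := tm_le_one (p + s); omega
    have hconst : ∀ s ≤ q, tm (p + q + s) = tm (p + q) := by
      intro s
      induction s with
      | zero => simp
      | succ s ihs =>
        intro hs
        have := hflip s (by omega); have := hflip' s (by omega); have := ihs (by omega)
        rw [← add_assoc]; omega
    have := hflip q le_rfl; have := hconst q le_rfl
    omega

lemma three_mul_two_pow_le_of_tm_prefix {k n : ℕ} (hn : 1 ≤ n)
    (h : ∀ r ≤ 2 ^ k, tm r = tm (n + r)) : 3 * 2 ^ k ≤ n := by
  induction k generalizing n with
  | zero =>
    have h0 := h 0 (by simp)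
    by_contra! hlt
    interval_cases n <;> revert h0 <;> decide
  | succ k ih =>
    have h2 : 2 ≤ 2 ^ (k + 1) := Nat.le_self_pow (by omega) 2
    obtain ⟨m, rfl | rfl⟩ := Nat.even_or_odd' n
    · have := ih (n := m) (by omega) fun r hr => by
        have := h (2 * r) (by rw [pow_succ]; omega)
        rwa [← mul_add, tm_two_mul, tm_two_mul] at this
      rw [pow_succ]; omega
    · -- `011` does not occur at an odd position.
      have h0 := h 0 (by omega); have h1 := h 1 (by omega); have h2 := h 2 (by omega)
      rw [add_zero, tm_two_mul_add_one] at h0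
      rw [show 2 * m + 1 + 1 = 2 * (m + 1) by ring, tm_two_mul] at h1
      rw [show 2 * m + 1 + 2 = 2 * (m + 1) + 1 by ring, tm_two_mul_add_one] at h2
      have : tm 0 = 0 ∧ tm 1 = 1 ∧ tm 2 = 1 := by decide
      have := tm_le_one m; omega

lemma perFn_tm_of_odd {i : ℕ} (hi : Odd i) : perFn tm i = 3 * 2 ^ Nat.log 2 i := by
  set k := Nat.log 2 i
  have hk : 2 ^ k ≤ i := Nat.pow_log_le_self 2 hi.pos.ne'
  have hk' : i < 2 ^ (k + 1) := Nat.lt_pow_succ_log_self one_lt_two i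
  rw [pow_succ] at hk'
  refine IsLeast.csInf_eq ⟨⟨Nat.one_le_iff_ne_zero.2 (by positivity), Or.inr ⟨by omega, fun r hr =>
    (tm_three_mul_two_pow_add (by rw [pow_succ]; omega)).symm⟩⟩, ?_⟩
  rintro n ⟨hn, ⟨hni, hsq⟩ | ⟨hin, hpre⟩⟩
  · have hsq' : ∀ k < n, tm (i - n + n + k) = tm (i - n + k) := by rwa [Nat.sub_add_cancel hni]
    exact absurd hsq' (tm_not_square_of_odd_center hn (by rwa [Nat.sub_add_cancel hni]))
  · rcases hk.eq_or_lt with heq | hlt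
    · -- `i = 1`, too short to contain the prefix of length `2 ^ k + 1`.
      have hk0 : k = 0 := by
        by_contra hk0
        exact Nat.not_odd_iff_even.2 ((Nat.even_pow' hk0).2 even_two) (heq ▸ hi)
      rw [hk0, pow_zero] at heq ⊢
      by_contra! hn3
      obtain rfl : n = 2 := by omega
      exact absurd (hpre 0 (by simp [← heq])) (by decide)
    · exact three_mul_two_pow_le_of_tm_prefix hn fun r hr => hpre r (by omega)

lemma three_mul_lt_two_mul_perFn_tm {i : ℕ} (hi : Odd i) : 3 * i < 2 * perFn tm i := by
  rw [perFn_tm_of_odd hi]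
  have := Nat.lt_pow_succ_log_self one_lt_two i
  rw [pow_succ] at this
  omega

lemma perFn_tm_le_three_mul {i : ℕ} (hi : Odd i) : perFn tm i ≤ 3 * i := by
  rw [perFn_tm_of_odd hi]
  have := Nat.pow_log_le_self 2 hi.pos.ne'
  omega

lemma sum_filter_odd_range_id (n : ℕ) : ∑ i ∈ (range n).filter Odd, i = (n / 2) ^ 2 := by
  induction n with
  | zero => simp
  | succ n ih =>
    rw [range_add_one, filter_insert]
    split_ifs with hn
    · obtain ⟨m, rfl⟩ := hn
      rw [sum_insert (by simp), ih, show (2 * m + 1) / 2 = m by omega,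
        show (2 * m + 1 + 1) / 2 = m + 1 by omega]
      ring
    · rwa [show (n + 1) / 2 = n / 2 by
        obtain ⟨m, rfl⟩ := Nat.not_odd_iff_even.1 hn; omega]

theorem tm_perFn_odd_sum_bounds (n : ℕ) (hn : 1 ≤ n) :
    (3 / 8 : ℝ) * ((n : ℝ) - 1) ^ 2 ≤
        ((∑ i ∈ (Finset.range n).filter (fun i => Odd i), perFn tm i : ℕ) : ℝ) ∧
      ((∑ i ∈ (Finset.range n).filter (fun i => Odd i), perFn tm i : ℕ) : ℝ) ≤
        (3 / 4 : ℝ) * (n : ℝ) ^ 2 := by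
  set S := ∑ i ∈ (range n).filter (fun i => Odd i), perFn tm i
  have hlow : 3 * (n / 2) ^ 2 ≤ 2 * S := by
    rw [← sum_filter_odd_range_id, mul_sum, mul_sum]
    exact sum_le_sum fun i hi => (three_mul_lt_two_mul_perFn_tm (mem_filter.1 hi).2).le
  have hup : S ≤ 3 * (n / 2) ^ 2 := by
    rw [← sum_filter_odd_range_id, mul_sum]
    exact sum_le_sum fun i hi => perFn_tm_le_three_mul (mem_filter.1 hi).2
  have hm_low : ((n - 1 : ℕ) : ℝ) ≤ 2 * (n / 2 : ℕ) := by exact_mod_cast (by omega)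
  have hm_up : (2 * (n / 2 : ℕ) : ℝ) ≤ n := by exact_mod_cast (by omega)
  rw [Nat.cast_sub hn, Nat.cast_one] at hm_low
  have hlowR : (3 * (n / 2 : ℕ) ^ 2 : ℝ) ≤ 2 * S := by exact_mod_cast hlow
  have hupR : (S : ℝ) ≤ 3 * (n / 2 : ℕ) ^ 2 := by exact_mod_cast hup
  have hn1 : (0 : ℝ) ≤ n - 1 := by rw [sub_nonneg]; exact_mod_cast hn
  constructor <;> nlinarith
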